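/- arXiv:1612.05760 — 4 statements merged into one kernel-verified Lean document; each statement's English description precedes it below -/
import Mathlib

section
/- For every integer n ≥ 2, every real r ≥ 0, and every node u of the grid G, the sum of the weights d(u,v)^{−r} over all v ∈ G with v ≠ u is strictly greater than 1/8 times the sum of the weights d(u,v)^{−r} over all v in the ball B_u. (Equivalently, a node drawn in B_u with probability proportional to d(u,·)^{−r} lands in G with probability greater than 1/8.) -/
/-- Manhattan distance on the integer lattice ℤ². -/
def manhattan (u v : ℤ × ℤ) : ℤ := |u.1 - v.1| + |u.2 - v.2|

/-- The n×n grid G = {0,…,n−1} × {0,…,n−1}. -/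
noncomputable def grid (n : ℤ) : Finset (ℤ × ℤ) :=
  Finset.Icc (0 : ℤ) (n - 1) ×ˢ Finset.Icc (0 : ℤ) (n - 1)

/-- The ball B_u : points v with 1 ≤ d(u,v) ≤ 2(n−1). -/
noncomputable def ball (n : ℤ) (u : ℤ × ℤ) : Finset (ℤ × ℤ) :=
  (Finset.Icc (u.1 - 2 * (n - 1)) (u.1 + 2 * (n - 1)) ×ˢ
    Finset.Icc (u.2 - 2 * (n - 1)) (u.2 + 2 * (n - 1))).filter
    (fun v => 1 ≤ manhattan u v ∧ manhattan u v ≤ 2 * (n - 1))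

/-- The weight of a node v ≠ u: d(u,v)^{−r}. -/
noncomputable def wt (r : ℝ) (u v : ℤ × ℤ) : ℝ := (manhattan u v : ℝ) ^ (-r)

open Finset

/-! Both sums are sums of a nonincreasing function of the distance `d(u, ·)`, which takes values
in `[1, 2(n-1)]` on both sets. By Abel summation it therefore suffices to compare, for each radius
`k`, the numbers of points at distance at most `k` from `u`. In the ball there are at most
`2k(k+2)` of them, since a sphere of radius `j` has at most `4j+2` points. The grid contains a box
with sides of `⌈k/2⌉+1` and `⌊k/2⌋+1` points around `u`, all within distance `k`, so it has more
than `k(k+2)/4` of them. -/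

section

variable {α β : Type*} {K : ℤ}

theorem sum_Ico_sub_add_one (f : ℤ → ℝ) {a b : ℤ} (hab : a ≤ b) :
    ∑ k ∈ Ico a b, (f k - f (k + 1)) = f a - f b := by
  induction b, hab using Int.leInduction with
  | base => simp
  | succ b hab ih => rw [← sum_Ico_add_eq_sum_Ico_add_one hab, ih]; ring

theorem sum_comp_eq_sum_Ico_mul_card_filter (f : ℤ → ℝ) {S : Finset α} {d : α → ℤ}
    (hd : ∀ x ∈ S, d x ∈ Icc 1 K) :
    ∑ x ∈ S, f (d x) = ∑ k ∈ Ico 1 K, (f k - f (k + 1)) * #{x ∈ S | d x ≤ k} + f K * #S := by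
  have hx : ∀ x ∈ S,
      f (d x) = ∑ k ∈ Ico 1 K, (if d x ≤ k then f k - f (k + 1) else 0) + f K := by
    intro x hx
    obtain ⟨h1, hK⟩ := mem_Icc.1 (hd x hx)
    rw [← sum_filter, Ico_filter_le, max_eq_right h1, sum_Ico_sub_add_one f hK]
    ring
  simp_rw [sum_congr rfl hx, sum_add_distrib, sum_comm (s := S), card_filter, Nat.cast_sum,
    mul_sum, sum_const, nsmul_eq_mul, mul_comm (f K)]
  simp

theorem sum_lt_mul_sum_of_card_filter_le {f : ℤ → ℝ} (hf : AntitoneOn f (Set.Icc 1 K))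
    (hfK : 0 < f K) {S : Finset α} {T : Finset β} {dS : α → ℤ} {dT : β → ℤ}
    (hS : ∀ x ∈ S, dS x ∈ Icc 1 K) (hT : ∀ y ∈ T, dT y ∈ Icc 1 K) {c : ℝ}
    (hle : ∀ k ∈ Ico 1 K, (#{x ∈ S | dS x ≤ k} : ℝ) ≤ c * #{y ∈ T | dT y ≤ k})
    (hlt : (#{x ∈ S | dS x ≤ K} : ℝ) < c * #{y ∈ T | dT y ≤ K}) :
    ∑ x ∈ S, f (dS x) < c * ∑ y ∈ T, f (dT y) := by
  rw [filter_true_of_mem fun x hx => (mem_Icc.1 (hS x hx)).2,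
    filter_true_of_mem fun y hy => (mem_Icc.1 (hT y hy)).2] at hlt
  rw [sum_comp_eq_sum_Ico_mul_card_filter f hS, sum_comp_eq_sum_Ico_mul_card_filter f hT,
    mul_add, mul_sum]
  refine add_lt_add_of_le_of_lt (sum_le_sum fun k hk => ?_)
    (by linarith [mul_lt_mul_of_pos_left hlt hfK])
  obtain ⟨h1, hK⟩ := mem_Ico.1 hk
  have hdec : 0 ≤ f k - f (k + 1) :=
    sub_nonneg.2 (hf ⟨h1, hK.le⟩ ⟨by omega, by omega⟩ (by omega))
  calc (f k - f (k + 1)) * #{x ∈ S | dS x ≤ k}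
      ≤ (f k - f (k + 1)) * (c * #{y ∈ T | dT y ≤ k}) :=
        mul_le_mul_of_nonneg_left (hle k hk) hdec
    _ = c * ((f k - f (k + 1)) * #{y ∈ T | dT y ≤ k}) := by ring

end

theorem manhattan_eq_natAbs (u v : ℤ × ℤ) :
    manhattan u v = (u.1 - v.1).natAbs + (u.2 - v.2).natAbs := by
  rw [manhattan, Int.abs_eq_natAbs, Int.abs_eq_natAbs]

theorem card_le_of_forall_manhattan_eq {u : ℤ × ℤ} {j : ℤ} (hj : 0 ≤ j) {s : Finset (ℤ × ℤ)}
    (hs : ∀ v ∈ s, manhattan u v = j) : (#s : ℤ) ≤ 4 * j + 2 := by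
  have hsub : s ⊆ (Icc (-j) j ×ˢ {1, -1}).image
      fun p => (u.1 + p.1, u.2 + p.2 * (j - p.1.natAbs)) := by
    intro v hv
    have hv := hs v hv
    rw [manhattan_eq_natAbs] at hv
    refine mem_image.2 ⟨(v.1 - u.1, if u.2 ≤ v.2 then 1 else -1), ?_, ?_⟩ <;>
      split_ifs <;>
      simp only [mem_product, mem_Icc, mem_insert, mem_singleton, Prod.ext_iff, or_true, true_or,
        and_true, one_mul, neg_one_mul] <;>
      omega
  calc (#s : ℤ) ≤ #(Icc (-j) j ×ˢ ({1, -1} : Finset ℤ)) := by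
        exact_mod_cast (card_le_card hsub).trans card_image_le
    _ = 4 * j + 2 := by
        rw [card_product, card_pair (by norm_num), Int.card_Icc, Nat.cast_mul,
          Int.toNat_of_nonneg (by omega)]
        push_cast
        ring

theorem card_filter_manhattan_le {u : ℤ × ℤ} {s : Finset (ℤ × ℤ)} (hu : u ∉ s) {k : ℤ}
    (hk : 0 ≤ k) : (#{v ∈ s | manhattan u v ≤ k} : ℤ) ≤ 2 * k * (k + 2) := by
  induction k, hk using Int.leInduction with
  | base =>
    have : {v ∈ s | manhattan u v ≤ 0} = ∅ := by
      refine filter_eq_empty_iff.2 fun v hv hd => hu ?_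
      rw [manhattan_eq_natAbs] at hd
      convert hv using 1
      ext <;> omega
    simp [this]
  | succ k hk ih =>
    have hsplit : {v ∈ s | manhattan u v ≤ k + 1} ⊆
        {v ∈ s | manhattan u v ≤ k} ∪ {v ∈ s | manhattan u v = k + 1} := by
      intro v hv
      obtain ⟨hvs, hd⟩ := mem_filter.1 hv
      rcases Int.le_add_one_iff.1 hd with h | h
      exacts [mem_union_left _ (mem_filter.2 ⟨hvs, h⟩),
        mem_union_right _ (mem_filter.2 ⟨hvs, h⟩)]
    have hsphere := card_le_of_forall_manhattan_eq (by omega : 0 ≤ k + 1)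
      (s := {v ∈ s | manhattan u v = k + 1}) fun v hv => (mem_filter.1 hv).2
    have hcard := (card_le_card hsplit).trans (card_union_le _ _)
    zify at hcard
    linarith

theorem card_grid_erase_filter_manhattan_ge {n : ℤ} {u : ℤ × ℤ} (hu : u ∈ grid n) {s t : ℤ}
    (hs : 0 ≤ s) (hsn : s ≤ n - 1) (ht : 0 ≤ t) (htn : t ≤ n - 1) :
    (s + 1) * (t + 1) - 1 ≤ (#{v ∈ (grid n).erase u | manhattan u v ≤ s + t} : ℤ) := by
  simp only [grid, mem_product, mem_Icc] at hu
  obtain ⟨a, ha⟩ : ∃ a, 0 ≤ a ∧ a ≤ u.1 ∧ u.1 ≤ a + s ∧ a + s ≤ n - 1 :=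
    ⟨min u.1 (n - 1 - s), by omega⟩
  obtain ⟨b, hb⟩ : ∃ b, 0 ≤ b ∧ b ≤ u.2 ∧ u.2 ≤ b + t ∧ b + t ≤ n - 1 :=
    ⟨min u.2 (n - 1 - t), by omega⟩
  have hbox : (Icc a (a + s) ×ˢ Icc b (b + t)).erase u ⊆
      {v ∈ (grid n).erase u | manhattan u v ≤ s + t} := by
    intro v hv
    obtain ⟨hne, hv⟩ := mem_erase.1 hv
    simp only [mem_product, mem_Icc] at hv
    refine mem_filter.2 ⟨mem_erase.2 ⟨hne, ?_⟩, ?_⟩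
    · simp only [grid, mem_product, mem_Icc]; omega
    · rw [manhattan_eq_natAbs]; omega
  have hcard : (#(Icc a (a + s) ×ˢ Icc b (b + t)) : ℤ) = (s + 1) * (t + 1) := by
    simp only [card_product, Int.card_Icc, Nat.cast_mul]
    rw [Int.toNat_of_nonneg (by omega), Int.toNat_of_nonneg (by omega)]
    ring
  have hsub := card_le_card hbox
  have herase := pred_card_le_card_erase (s := Icc a (a + s) ×ˢ Icc b (b + t)) (a := u)
  omega

theorem mul_add_two_lt_four_mul_card_grid_erase_filter {n : ℤ} {u : ℤ × ℤ} (hu : u ∈ grid n)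
    {k : ℤ} (hk : 1 ≤ k) (hkn : k ≤ 2 * (n - 1)) :
    k * (k + 2) < 4 * (#{v ∈ (grid n).erase u | manhattan u v ≤ k} : ℤ) := by
  have hbox := card_grid_erase_filter_manhattan_ge hu (s := k - k / 2) (t := k / 2)
    (by omega) (by omega) (by omega) (by omega)
  rw [sub_add_cancel] at hbox
  have hpar : k - k / 2 - k / 2 = 0 ∨ k - k / 2 - k / 2 = 1 := by omega
  rcases hpar with h | h <;> nlinarith

theorem manhattan_mem_Icc_of_mem_grid {n : ℤ} {u v : ℤ × ℤ} (hu : u ∈ grid n)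
    (hv : v ∈ (grid n).erase u) : manhattan u v ∈ Icc 1 (2 * (n - 1)) := by
  obtain ⟨hne, hv⟩ := mem_erase.1 hv
  have hne' : ¬(v.1 = u.1 ∧ v.2 = u.2) := fun h => hne (Prod.ext h.1 h.2)
  simp only [grid, mem_product, mem_Icc] at hu hv
  rw [mem_Icc, manhattan_eq_natAbs]
  omega

theorem antitoneOn_intCast_rpow_neg {r : ℝ} (hr : 0 ≤ r) :
    AntitoneOn (fun j : ℤ => (j : ℝ) ^ (-r)) (Set.Ici 1) := fun i hi j _ hij =>
  Real.rpow_le_rpow_of_nonpos (by exact_mod_cast hi) (by exact_mod_cast hij) (neg_nonpos.2 hr)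

/-- A node drawn in B_u with probability proportional to d(u,·)^{−r} lands in G
with probability greater than 1/8. -/
theorem weight_grid_gt_eighth_ball (n : ℤ) (hn : 2 ≤ n) (r : ℝ) (hr : 0 ≤ r)
    (u : ℤ × ℤ) (hu : u ∈ grid n) :
    (1 / 8) * ∑ v ∈ ball n u, wt r u v < ∑ v ∈ (grid n).erase u, wt r u v := by
  have hball : ∀ v ∈ ball n u, manhattan u v ∈ Icc 1 (2 * (n - 1)) :=
    fun v hv => mem_Icc.2 (mem_filter.1 hv).2
  have hcount : ∀ k ∈ Icc 1 (2 * (n - 1)), (#{v ∈ ball n u | manhattan u v ≤ k} : ℝ) <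
      8 * #{v ∈ (grid n).erase u | manhattan u v ≤ k} := by
    intro k hk
    obtain ⟨hk1, hkn⟩ := mem_Icc.1 hk
    have hu_ball : u ∉ ball n u := fun h => by
      simpa [manhattan] using (mem_filter.1 h).2.1
    have hball_le := card_filter_manhattan_le hu_ball (by omega : 0 ≤ k)
    have hgrid_gt := mul_add_two_lt_four_mul_card_grid_erase_filter hu hk1 hkn
    have : (#{v ∈ ball n u | manhattan u v ≤ k} : ℤ) <
        8 * #{v ∈ (grid n).erase u | manhattan u v ≤ k} := by linarith
    exact_mod_cast this
  have := sum_lt_mul_sum_of_card_filter_le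
    ((antitoneOn_intCast_rpow_neg hr).mono Set.Icc_subset_Ici_self)
    (Real.rpow_pos_of_pos (by exact_mod_cast (by omega : (0 : ℤ) < 2 * (n - 1))) _) hball
    (fun v hv => manhattan_mem_Icc_of_mem_grid hu hv)
    (fun k hk => (hcount k (Ico_subset_Icc_self hk)).le) (hcount _ (mem_Icc.2 ⟨by omega, le_rfl⟩))
  simp only [wt]
  linarith
end

section
/- For every integer n ≥ 2, every real r ≥ 0, and every node u of the grid G, the sum of d(u,v)^{−r} over v ∈ G with v ≠ u is at least the sum of d(u,v)^{−r} over v ∈ G_c with v ≠ u, where G_c is the n×n lattice having u as one of its corners. (The corner position of u is the worst case for the total weight.) -/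
/-- G_c : the n×n lattice having u as a corner, {u + (a,b) : 0 ≤ a,b ≤ n−1}. -/
noncomputable def gridCorner (n : ℤ) (u : ℤ × ℤ) : Finset (ℤ × ℤ) :=
  Finset.Icc u (u + (n - 1, n - 1))

open Finset

section grid

variable {n : ℤ} {u v : ℤ × ℤ}

theorem mem_grid_iff :
    v ∈ grid n ↔ v.1 ∈ Set.Icc 0 (n - 1) ∧ v.2 ∈ Set.Icc 0 (n - 1) := by
  simp only [grid, mem_product, mem_Icc, Set.mem_Icc]

theorem mem_gridCorner_iff : v ∈ gridCorner n u ↔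
    v.1 ∈ Set.Icc u.1 (u.1 + (n - 1)) ∧ v.2 ∈ Set.Icc u.2 (u.2 + (n - 1)) := by
  simp only [gridCorner, mem_Icc, Prod.le_def, Prod.fst_add, Prod.snd_add, Set.mem_Icc]
  tauto

theorem one_le_manhattan (h : u ≠ v) : 1 ≤ manhattan u v := by
  unfold manhattan
  rcases ne_or_eq u.1 v.1 with h₁ | h₁
  · linarith [Int.one_le_abs (sub_ne_zero.2 h₁), abs_nonneg (u.2 - v.2)]
  · have h₂ : u.2 ≠ v.2 := fun h₂ => h (Prod.ext h₁ h₂)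
    linarith [Int.one_le_abs (sub_ne_zero.2 h₂), abs_nonneg (u.1 - v.1)]

end grid

def cornerFold (c t : ℤ) : ℤ := if t ≤ 2 * c then 2 * c - t else t - c

section cornerFold

variable {c t : ℤ}

theorem cornerFold_self (hc : 0 ≤ c) : cornerFold c c = c := by
  unfold cornerFold; split_ifs <;> omega

theorem cornerFold_injOn (c : ℤ) : Set.InjOn (cornerFold c) (Set.Ici c) := by
  intro t₁ h₁ t₂ h₂ h
  simp only [Set.mem_Ici] at h₁ h₂
  unfold cornerFold at h
  split_ifs at h <;> omega

theorem cornerFold_mem_Icc {m : ℤ} (hc : c ∈ Set.Icc 0 m) (ht : t ∈ Set.Icc c (c + m)) :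
    cornerFold c t ∈ Set.Icc 0 m := by
  obtain ⟨hc₀, hcm⟩ := hc
  obtain ⟨htc, htm⟩ := ht
  unfold cornerFold; split_ifs <;> constructor <;> omega

theorem abs_sub_cornerFold_le (hc : 0 ≤ c) (ht : c ≤ t) : |c - cornerFold c t| ≤ |c - t| := by
  rw [abs_of_nonpos (by omega : c - t ≤ 0), abs_le]
  unfold cornerFold; split_ifs <;> constructor <;> omega

end cornerFold

def cornerFoldPair (u v : ℤ × ℤ) : ℤ × ℤ := (cornerFold u.1 v.1, cornerFold u.2 v.2)

section cornerFoldPair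

variable {n : ℤ} {u v : ℤ × ℤ}

theorem cornerFoldPair_self (hu : 0 ≤ u) : cornerFoldPair u u = u :=
  Prod.ext (cornerFold_self hu.1) (cornerFold_self hu.2)

theorem cornerFoldPair_injOn (u : ℤ × ℤ) : Set.InjOn (cornerFoldPair u) (Set.Ici u) :=
  fun _ h₁ _ h₂ h => Prod.ext (cornerFold_injOn _ h₁.1 h₂.1 congr($h.1))
    (cornerFold_injOn _ h₁.2 h₂.2 congr($h.2))

theorem cornerFoldPair_mem_grid (hu : u ∈ grid n) (hv : v ∈ gridCorner n u) :
    cornerFoldPair u v ∈ grid n := by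
  rw [mem_grid_iff] at hu ⊢
  rw [mem_gridCorner_iff] at hv
  exact ⟨cornerFold_mem_Icc hu.1 hv.1, cornerFold_mem_Icc hu.2 hv.2⟩

theorem manhattan_cornerFoldPair_le (hu : 0 ≤ u) (hv : u ≤ v) :
    manhattan u (cornerFoldPair u v) ≤ manhattan u v :=
  add_le_add (abs_sub_cornerFold_le hu.1 hv.1) (abs_sub_cornerFold_le hu.2 hv.2)

end cornerFoldPair

theorem sum_erase_gridCorner_le_sum_erase_grid {n : ℤ} {u : ℤ × ℤ} (hu : u ∈ grid n)
    (φ : ℤ → ℝ) (hφ : AntitoneOn φ (Set.Ici 1)) (hφ₀ : ∀ d, 1 ≤ d → 0 ≤ φ d) :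
    ∑ v ∈ (gridCorner n u).erase u, φ (manhattan u v) ≤
      ∑ v ∈ (grid n).erase u, φ (manhattan u v) := by
  have hu₀ : 0 ≤ u := by
    rw [mem_grid_iff] at hu
    exact ⟨hu.1.1, hu.2.1⟩
  have hcorner : ∀ v ∈ (gridCorner n u).erase u, u ≤ v :=
    fun v hv => (mem_Icc.1 (mem_of_mem_erase hv)).1
  have hinj : Set.InjOn (cornerFoldPair u) ((gridCorner n u).erase u) :=
    (cornerFoldPair_injOn u).mono hcorner
  have hmaps : ∀ v ∈ (gridCorner n u).erase u, cornerFoldPair u v ∈ (grid n).erase u := by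
    intro v hv
    refine mem_erase.2 ⟨fun h => ?_, cornerFoldPair_mem_grid hu (mem_of_mem_erase hv)⟩
    have hvu : v = u := cornerFoldPair_injOn u (hcorner v hv) Set.self_mem_Ici
      (h.trans (cornerFoldPair_self hu₀).symm)
    exact ne_of_mem_erase hv hvu
  calc ∑ v ∈ (gridCorner n u).erase u, φ (manhattan u v)
      ≤ ∑ v ∈ (gridCorner n u).erase u, φ (manhattan u (cornerFoldPair u v)) := by
        refine sum_le_sum fun v hv => hφ ?_ ?_ (manhattan_cornerFoldPair_le hu₀ (hcorner v hv))
        · exact one_le_manhattan (ne_of_mem_erase (hmaps v hv)).symm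
        · exact one_le_manhattan (ne_of_mem_erase hv).symm
    _ = ∑ w ∈ ((gridCorner n u).erase u).image (cornerFoldPair u), φ (manhattan u w) :=
        (sum_image (f := fun w => φ (manhattan u w)) hinj).symm
    _ ≤ ∑ v ∈ (grid n).erase u, φ (manhattan u v) := by
        refine sum_le_sum_of_subset_of_nonneg (image_subset_iff.2 hmaps) fun w hw _ => ?_
        exact hφ₀ _ (one_le_manhattan (ne_of_mem_erase hw).symm)

theorem weight_gridCorner_le_grid_general (n : ℤ) (r : ℝ) (hr : 0 ≤ r)
    (u : ℤ × ℤ) (hu : u ∈ grid n) :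
    ∑ v ∈ (gridCorner n u).erase u, wt r u v ≤ ∑ v ∈ (grid n).erase u, wt r u v := by
  refine sum_erase_gridCorner_le_sum_erase_grid hu (fun d : ℤ => (d : ℝ) ^ (-r)) ?_
    fun d _ => Real.rpow_nonneg (by positivity) _
  intro d₁ h₁ d₂ _ h
  exact Real.rpow_le_rpow_of_nonpos (by exact_mod_cast Int.one_pos.trans_le h₁)
    (by exact_mod_cast h) (neg_nonpos.2 hr)

/-- The corner position of u is the worst case for the total weight. -/
theorem weight_gridCorner_le_grid (n : ℤ) (hn : 2 ≤ n) (r : ℝ) (hr : 0 ≤ r)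
    (u : ℤ × ℤ) (hu : u ∈ grid n) :
    ∑ v ∈ (gridCorner n u).erase u, wt r u v ≤ ∑ v ∈ (grid n).erase u, wt r u v :=
  weight_gridCorner_le_grid_general n r hr u hu
end

section
/- For every integer n ≥ 1 and every node u of the grid G, there exists a bijection f from G onto G_c such that f(u) = u and d(u, f(v)) ≥ d(u,v) for all v ∈ G, where G_c is the n×n lattice having u as one of its corners. -/
def foldToCorner (n c x : ℤ) : ℤ := if c ≤ x then x else c + (n - 1 - x)

lemma foldToCorner_self (n c : ℤ) : foldToCorner n c c = c := by
  simp [foldToCorner]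

lemma foldToCorner_bijOn {n c : ℤ} (hc : 0 ≤ c) :
    Set.BijOn (foldToCorner n c) (Set.Icc 0 (n - 1)) (Set.Icc c (c + (n - 1))) := by
  refine ⟨fun x hx ↦ ?_, fun x hx y hy hxy ↦ ?_, fun y hy ↦ ?_⟩
  · simp only [Set.mem_Icc, foldToCorner] at hx ⊢
    split <;> omega
  · simp only [Set.mem_Icc, foldToCorner] at hx hy hxy
    split at hxy <;> split at hxy <;> omega
  · simp only [Set.mem_Icc] at hy
    refine ⟨if y ≤ n - 1 then y else c + (n - 1 - y), ?_, ?_⟩ <;>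
      simp only [Set.mem_Icc, foldToCorner] <;> split_ifs <;> omega

lemma abs_sub_le_abs_sub_foldToCorner {n c : ℤ} (hc : c ≤ n - 1) (x : ℤ) :
    |c - x| ≤ |c - foldToCorner n c x| := by
  unfold foldToCorner
  split
  · rfl
  · rw [abs_of_pos (by omega), abs_of_neg (by omega)]
    omega

theorem exists_bijOn_grid_gridCorner_general (n : ℤ) (u : ℤ × ℤ) (hu : u ∈ grid n) :
    ∃ f : ℤ × ℤ → ℤ × ℤ,
      Set.BijOn f (grid n : Set (ℤ × ℤ)) (gridCorner n u : Set (ℤ × ℤ)) ∧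
      f u = u ∧
      ∀ v ∈ grid n, manhattan u v ≤ manhattan u (f v) := by
  simp only [grid, Finset.mem_product, Finset.mem_Icc] at hu
  obtain ⟨⟨hu₁, hu₁'⟩, hu₂, hu₂'⟩ := hu
  refine ⟨Prod.map (foldToCorner n u.1) (foldToCorner n u.2), ?_, ?_, fun v _ ↦ ?_⟩
  · rw [grid, gridCorner, Finset.coe_product, Finset.coe_Icc, Finset.coe_Icc,
      ← Set.Icc_prod_Icc]
    exact (foldToCorner_bijOn hu₁).prodMap (foldToCorner_bijOn hu₂)
  · exact Prod.ext (foldToCorner_self n u.1) (foldToCorner_self n u.2)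
  · exact add_le_add (abs_sub_le_abs_sub_foldToCorner hu₁' v.1)
      (abs_sub_le_abs_sub_foldToCorner hu₂' v.2)

/-- There is a bijection f from G onto G_c fixing u that does not decrease the
distance to u. -/
theorem exists_bijOn_grid_gridCorner (n : ℤ) (hn : 1 ≤ n) (u : ℤ × ℤ) (hu : u ∈ grid n) :
    ∃ f : ℤ × ℤ → ℤ × ℤ,
      Set.BijOn f (grid n : Set (ℤ × ℤ)) (gridCorner n u : Set (ℤ × ℤ)) ∧
      f u = u ∧
      ∀ v ∈ grid n, manhattan u v ≤ manhattan u (f v) :=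
  exists_bijOn_grid_gridCorner_general n u hu
end

section
/- β-dimensional grid bound: for every integer β ≥ 1, every integer n ≥ 2, every real r ≥ 0, and every node u of the β-dimensional grid G = {0,…,n−1}^β, the sum of d(u,v)^{−r} over v ∈ G with v ≠ u is at least 2^{−β} times the sum of d(u,v)^{−r} over v ∈ H_u with v ≠ u, where H_u is the hypercube lattice of side 2n−1 centered at u. -/
/-- Manhattan distance on the integer lattice ℤ^β. -/
def manhattanDim {β : ℕ} (u v : Fin β → ℤ) : ℤ := ∑ i, |u i - v i|

/-- The β-dimensional grid G = {0,…,n−1}^β. -/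
noncomputable def gridDim (β : ℕ) (n : ℤ) : Finset (Fin β → ℤ) :=
  Fintype.piFinset (fun _ => Finset.Icc (0 : ℤ) (n - 1))

/-- H_u : the hypercube lattice of side 2n−1 centered at u. -/
noncomputable def hypercube (β : ℕ) (n : ℤ) (u : Fin β → ℤ) : Finset (Fin β → ℤ) :=
  Fintype.piFinset (fun i => Finset.Icc (u i - (n - 1)) (u i + (n - 1)))

/-- The weight of a node v ≠ u: d(u,v)^{−r}. -/
noncomputable def wtDim {β : ℕ} (r : ℝ) (u v : Fin β → ℤ) : ℝ :=
  (manhattanDim u v : ℝ) ^ (-r)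

/-!
Fold the hypercube `H_u` onto the grid: a point at coordinate offsets `dᵢ = |vᵢ - uᵢ| ≤ n - 1`
is sent to the grid point whose `i`-th coordinate is `uᵢ + dᵢ` if that stays in the grid and
`n - 1 - dᵢ` otherwise. This never increases the distance to `u`, never hits `u` unless `v = u`,
and is injective on offset vectors, so each fibre has at most `2^β` points (the sign choices).
-/

open Finset

theorem Finset.sum_le_card_mul_sum_of_card_fiber_le {α γ R : Type*} [DecidableEq γ]
    [CommSemiring R] [PartialOrder R] [IsOrderedRing R]
    {s : Finset α} {t : Finset γ} {f : α → γ} {g : α → R} {h : γ → R} {k : ℕ}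
    (hf : ∀ a ∈ s, f a ∈ t) (hfib : ∀ a ∈ s, #{a' ∈ s | f a' = f a} ≤ k)
    (hgh : ∀ a ∈ s, g a ≤ h (f a)) (h0 : ∀ b ∈ t, 0 ≤ h b) :
    ∑ a ∈ s, g a ≤ k * ∑ b ∈ t, h b := by
  have him : ∀ b ∈ s.image f, 0 ≤ h b := fun b hb => h0 b (image_subset_iff.2 hf hb)
  calc ∑ a ∈ s, g a
      ≤ ∑ a ∈ s, h (f a) := sum_le_sum hgh
    _ = ∑ b ∈ s.image f, #{a ∈ s | f a = b} • h b := sum_comp h f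
    _ ≤ ∑ b ∈ s.image f, k • h b := by
        refine sum_le_sum fun b hb => nsmul_le_nsmul_left (him b hb) ?_
        obtain ⟨a, ha, rfl⟩ := mem_image.1 hb
        exact hfib a ha
    _ = k * ∑ b ∈ s.image f, h b := by simp only [nsmul_eq_mul, mul_sum]
    _ ≤ k * ∑ b ∈ t, h b := mul_le_mul_of_nonneg_left
        (sum_le_sum_of_subset_of_nonneg (image_subset_iff.2 hf) fun b hb _ => h0 b hb)
        k.cast_nonneg

theorem card_le_two_pow_of_abs_sub_eq {ι : Type*} [Fintype ι] [DecidableEq ι]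
    {S : Finset (ι → ℤ)} (u e : ι → ℤ) (h : ∀ v ∈ S, ∀ i, |v i - u i| = e i) :
    #S ≤ 2 ^ Fintype.card ι := by
  have hsub : S ⊆ Fintype.piFinset fun i => {u i - e i, u i + e i} := fun v hv =>
    Fintype.mem_piFinset.2 fun i => by
      have := h v hv i
      simp only [mem_insert, mem_singleton]
      rcases abs_cases (v i - u i) with ⟨_, _⟩ | ⟨_, _⟩ <;> omega
  calc #S ≤ ∏ i, #{u i - e i, u i + e i} := (card_le_card hsub).trans_eq (Fintype.card_piFinset _)
    _ ≤ ∏ _i : ι, 2 := prod_le_prod' fun i _ => card_le_two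
    _ = 2 ^ Fintype.card ι := by simp

theorem mem_gridDim {β : ℕ} {n : ℤ} {v : Fin β → ℤ} :
    v ∈ gridDim β n ↔ ∀ i, 0 ≤ v i ∧ v i ≤ n - 1 := by
  simp [gridDim]

theorem mem_hypercube {β : ℕ} {n : ℤ} {u v : Fin β → ℤ} :
    v ∈ hypercube β n u ↔ ∀ i, |v i - u i| ≤ n - 1 := by
  simp only [hypercube, Fintype.mem_piFinset, mem_Icc, abs_le]
  exact forall_congr' fun i => by omega

theorem manhattanDim_pos {β : ℕ} {u v : Fin β → ℤ} (h : v ≠ u) : 0 < manhattanDim u v := by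
  obtain ⟨i, hi⟩ := Function.ne_iff.1 h
  exact sum_pos' (fun i _ => abs_nonneg _) ⟨i, mem_univ i, abs_pos.2 (sub_ne_zero.2 hi.symm)⟩

theorem wtDim_nonneg {β : ℕ} (r : ℝ) (u v : Fin β → ℤ) : 0 ≤ wtDim r u v :=
  Real.rpow_nonneg (by exact_mod_cast sum_nonneg fun i _ => abs_nonneg (u i - v i)) _

theorem wtDim_le_wtDim {β : ℕ} {r : ℝ} (hr : 0 ≤ r) {u v t : Fin β → ℤ} (ht : t ≠ u)
    (htv : manhattanDim u t ≤ manhattanDim u v) : wtDim r u v ≤ wtDim r u t :=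
  Real.rpow_le_rpow_of_nonpos (by exact_mod_cast manhattanDim_pos ht) (by exact_mod_cast htv)
    (neg_nonpos.2 hr)

def gridFoldCoord (n a d : ℤ) : ℤ := if a + d ≤ n - 1 then a + d else n - 1 - d

def gridFold {β : ℕ} (n : ℤ) (u v : Fin β → ℤ) : Fin β → ℤ :=
  fun i => gridFoldCoord n (u i) |v i - u i|

section gridFoldCoord

variable {n a d d' : ℤ}

theorem gridFoldCoord_nonneg (ha : 0 ≤ a) (hd : 0 ≤ d) (hdn : d ≤ n - 1) :
    0 ≤ gridFoldCoord n a d := by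
  unfold gridFoldCoord; split_ifs <;> omega

theorem gridFoldCoord_le (hd : 0 ≤ d) : gridFoldCoord n a d ≤ n - 1 := by
  unfold gridFoldCoord; split_ifs <;> omega

theorem abs_gridFoldCoord_sub_le (han : a ≤ n - 1) (hd : 0 ≤ d) :
    |gridFoldCoord n a d - a| ≤ d := by
  unfold gridFoldCoord; rw [abs_le]; split_ifs <;> omega

theorem gridFoldCoord_eq_self_iff (han : a ≤ n - 1) : gridFoldCoord n a d = a ↔ d = 0 := by
  unfold gridFoldCoord; split_ifs <;> omega

theorem gridFoldCoord_inj (hd : 0 ≤ d) (hd' : 0 ≤ d') :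
    gridFoldCoord n a d = gridFoldCoord n a d' ↔ d = d' := by
  unfold gridFoldCoord; split_ifs <;> omega

end gridFoldCoord

section gridFold

variable {β : ℕ} {n : ℤ} {u v v' : Fin β → ℤ}

theorem gridFold_mem_gridDim (hu : u ∈ gridDim β n) (hv : v ∈ hypercube β n u) :
    gridFold n u v ∈ gridDim β n :=
  mem_gridDim.2 fun i => ⟨gridFoldCoord_nonneg (mem_gridDim.1 hu i).1 (abs_nonneg _)
    (mem_hypercube.1 hv i), gridFoldCoord_le (abs_nonneg _)⟩

theorem gridFold_eq_self_iff (hu : u ∈ gridDim β n) : gridFold n u v = u ↔ v = u := by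
  simp only [funext_iff, gridFold, gridFoldCoord_eq_self_iff (mem_gridDim.1 hu _).2, abs_eq_zero,
    sub_eq_zero]

theorem manhattanDim_gridFold_le (hu : u ∈ gridDim β n) :
    manhattanDim u (gridFold n u v) ≤ manhattanDim u v :=
  sum_le_sum fun i _ => by
    rw [abs_sub_comm, abs_sub_comm (u i)]
    exact abs_gridFoldCoord_sub_le (mem_gridDim.1 hu i).2 (abs_nonneg _)

theorem gridFold_eq_iff : gridFold n u v = gridFold n u v' ↔ ∀ i, |v i - u i| = |v' i - u i| := by
  simp only [funext_iff, gridFold, gridFoldCoord_inj (abs_nonneg _) (abs_nonneg _)]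

end gridFold

theorem weight_gridDim_ge_hypercube_general (β : ℕ) (n : ℤ) (r : ℝ) (hr : 0 ≤ r)
    (u : Fin β → ℤ) (hu : u ∈ gridDim β n) :
    (1 / 2 ^ β) * ∑ v ∈ (hypercube β n u).erase u, wtDim r u v ≤
      ∑ v ∈ (gridDim β n).erase u, wtDim r u v := by
  rw [one_div, inv_mul_le_iff₀ (by positivity)]
  have hfold : ∀ v ∈ (hypercube β n u).erase u, gridFold n u v ∈ (gridDim β n).erase u :=
    fun v hv => mem_erase.2 ⟨(gridFold_eq_self_iff hu).not.2 (ne_of_mem_erase hv),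
      gridFold_mem_gridDim hu (mem_of_mem_erase hv)⟩
  exact_mod_cast sum_le_card_mul_sum_of_card_fiber_le hfold
    (fun v _ => (card_le_two_pow_of_abs_sub_eq u (fun i => |v i - u i|)
      fun v' hv' => gridFold_eq_iff.1 (mem_filter.1 hv').2).trans_eq (by rw [Fintype.card_fin]))
    (fun v hv => wtDim_le_wtDim hr ((mem_erase.1 (hfold v hv)).1) (manhattanDim_gridFold_le hu))
    (fun t _ => wtDim_nonneg r u t)

/-- β-dimensional grid bound: the total weight of G \ {u} is at least 2^{−β}
times the total weight of H_u \ {u}. -/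
theorem weight_gridDim_ge_hypercube (β : ℕ) (hβ : 1 ≤ β) (n : ℤ) (hn : 2 ≤ n)
    (r : ℝ) (hr : 0 ≤ r) (u : Fin β → ℤ) (hu : u ∈ gridDim β n) :
    (1 / 2 ^ β) * ∑ v ∈ (hypercube β n u).erase u, wtDim r u v ≤
      ∑ v ∈ (gridDim β n).erase u, wtDim r u v :=
  weight_gridDim_ge_hypercube_general β n r hr u hu
end
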